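/- For s ∈ (0,1), the function w_{0,s}(x₁,x₂) = (√(x₁²+x₂²)+x₁)^s satisfies ∂₁(x₂^{1−2s} ∂₁ w_{0,s}) + ∂₂(x₂^{1−2s} ∂₂ w_{0,s}) = 0 at every point of the open upper half-plane {x₂ > 0}. -/

import Mathlib

/-!
Write `ρ = √(x₁² + x₂²)` and `w = w0 s x₁ x₂ = (ρ + x₁)^s`. Since `(ρ + x₁)(ρ - x₁) = x₂²`, both
first derivatives are multiples of `w` itself: `∂₁w = s w / ρ` and `∂₂w = s w (ρ - x₁) / (x₂ ρ)`.
Differentiating once more, the two weighted terms come out as `± s x₂^(1-2s) w (s ρ - x₁) / ρ³`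
and cancel.
-/

open Real

/-- The `s`-homogeneous model function `w_{0,s}`. -/
noncomputable def w0 (s x₁ x₂ : ℝ) : ℝ :=
  (Real.sqrt (x₁ ^ 2 + x₂ ^ 2) + x₁) ^ s

open Filter Topology

lemma sqrt_sq_add_sq_pos {a b : ℝ} (hb : b ≠ 0) : 0 < √(a ^ 2 + b ^ 2) :=
  Real.sqrt_pos.mpr (by positivity)

lemma sqrt_sq_add_sq_add_pos {a b : ℝ} (hb : b ≠ 0) : 0 < √(a ^ 2 + b ^ 2) + a := by
  have : |a| < √(a ^ 2 + b ^ 2) := by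
    rw [← Real.sqrt_sq_eq_abs]
    exact Real.sqrt_lt_sqrt (sq_nonneg a) (lt_add_of_pos_right _ (by positivity))
  linarith [neg_abs_le a]

lemma hasDerivAt_sqrt_sq_add_sq_left (b : ℝ) {t : ℝ} (h : t ^ 2 + b ^ 2 ≠ 0) :
    HasDerivAt (fun a => √(a ^ 2 + b ^ 2)) (t / √(t ^ 2 + b ^ 2)) t := by
  convert ((hasDerivAt_pow 2 t).add_const (b ^ 2)).sqrt h using 1
  field_simp
  ring

lemma hasDerivAt_sqrt_sq_add_sq_right (a : ℝ) {t : ℝ} (h : a ^ 2 + t ^ 2 ≠ 0) :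
    HasDerivAt (fun b => √(a ^ 2 + b ^ 2)) (t / √(a ^ 2 + t ^ 2)) t := by
  convert ((hasDerivAt_pow 2 t).const_add (a ^ 2)).sqrt h using 1
  field_simp
  ring

lemma hasDerivAt_w0_left (s : ℝ) {b : ℝ} (hb : b ≠ 0) (t : ℝ) :
    HasDerivAt (fun a => w0 s a b) (s * w0 s t b / √(t ^ 2 + b ^ 2)) t := by
  have hψ := sqrt_sq_add_sq_add_pos (a := t) hb
  convert ((hasDerivAt_sqrt_sq_add_sq_left b (by positivity)).add (hasDerivAt_id t)).rpow_const
    (p := s) (Or.inl hψ.ne') using 1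
  · rfl
  · simp only [w0, Pi.add_apply, id]
    rw [rpow_sub_one hψ.ne']
    field_simp
    ring

lemma hasDerivAt_w0_right (s a : ℝ) {t : ℝ} (ht : t ≠ 0) :
    HasDerivAt (fun b => w0 s a b)
      (s * w0 s a t * (√(a ^ 2 + t ^ 2) - a) / (t * √(a ^ 2 + t ^ 2))) t := by
  have hψ := sqrt_sq_add_sq_add_pos (a := a) ht
  have hρ2 : √(a ^ 2 + t ^ 2) ^ 2 = a ^ 2 + t ^ 2 := Real.sq_sqrt (by positivity)
  convert ((hasDerivAt_sqrt_sq_add_sq_right a (by positivity)).add_const a).rpow_const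
    (p := s) (Or.inl hψ.ne') using 1
  · rfl
  · simp only [w0]
    rw [rpow_sub_one hψ.ne']
    field_simp
    linear_combination s * hρ2

lemma deriv_deriv_w0_left (s : ℝ) {b : ℝ} (hb : b ≠ 0) (x : ℝ) :
    deriv (deriv fun a => w0 s a b) x
      = s * w0 s x b * (s * √(x ^ 2 + b ^ 2) - x) / √(x ^ 2 + b ^ 2) ^ 3 := by
  have hρ := sqrt_sq_add_sq_pos (a := x) hb
  rw [funext fun t => (hasDerivAt_w0_left s hb t).deriv]
  refine (((hasDerivAt_w0_left s hb x).const_mul s).div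
    (hasDerivAt_sqrt_sq_add_sq_left b (by positivity)) hρ.ne').deriv.trans ?_
  field_simp

lemma deriv_rpow_mul_deriv_w0_right (s a : ℝ) {x : ℝ} (hx : 0 < x) :
    deriv (fun t => t ^ (1 - 2 * s) * deriv (fun b => w0 s a b) t) x
      = x ^ (1 - 2 * s) * s * w0 s a x * (a - s * √(a ^ 2 + x ^ 2)) / √(a ^ 2 + x ^ 2) ^ 3 := by
  have hρ := sqrt_sq_add_sq_pos (a := a) hx.ne'
  have hρ2 : √(a ^ 2 + x ^ 2) ^ 2 = a ^ 2 + x ^ 2 := Real.sq_sqrt (by positivity)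
  have hsq : a ^ 2 + x ^ 2 ≠ 0 := by positivity
  have hflux : (fun t => t ^ (1 - 2 * s) * deriv (fun b => w0 s a b) t) =ᶠ[𝓝 x]
      fun t => t ^ (1 - 2 * s) *
        (s * w0 s a t * (√(a ^ 2 + t ^ 2) - a) / (t * √(a ^ 2 + t ^ 2))) := by
    filter_upwards [Ioi_mem_nhds hx] with t ht
    rw [(hasDerivAt_w0_right s a ht.ne').deriv]
  rw [hflux.deriv_eq]
  refine ((hasDerivAt_rpow_const (p := 1 - 2 * s) (Or.inl hx.ne')).mul
    ((((hasDerivAt_w0_right s a hx.ne').const_mul s).mul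
      ((hasDerivAt_sqrt_sq_add_sq_right a hsq).sub_const a)).div
      ((hasDerivAt_id x).mul (hasDerivAt_sqrt_sq_add_sq_right a hsq))
      (mul_ne_zero hx.ne' hρ.ne'))).deriv.trans ?_
  simp only [Pi.mul_apply, Pi.div_apply, id]
  rw [rpow_sub_one hx.ne']
  field_simp
  linear_combination -(s ^ 2 * w0 s a x * √(a ^ 2 + x ^ 2)) * hρ2

theorem stmt2_general (s : ℝ) (x₁ x₂ : ℝ) (hx₂ : 0 < x₂) :
    deriv (fun t => x₂ ^ (1 - 2 * s) * deriv (fun a => w0 s a x₂) t) x₁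
      + deriv (fun t => t ^ (1 - 2 * s) * deriv (fun b => w0 s x₁ b) t) x₂ = 0 := by
  rw [deriv_const_mul_field, deriv_deriv_w0_left s hx₂.ne', deriv_rpow_mul_deriv_w0_right s x₁ hx₂]
  ring

/-- `w_{0,s}` solves `∂₁(x₂^{1-2s} ∂₁ w) + ∂₂(x₂^{1-2s} ∂₂ w) = 0` in the open
upper half-plane. -/
theorem stmt2 (s : ℝ) (hs : s ∈ Set.Ioo (0 : ℝ) 1) (x₁ x₂ : ℝ) (hx₂ : 0 < x₂) :
    deriv (fun t => x₂ ^ (1 - 2 * s) * deriv (fun a => w0 s a x₂) t) x₁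
      + deriv (fun t => t ^ (1 - 2 * s) * deriv (fun b => w0 s x₁ b) t) x₂ = 0 :=
  stmt2_general s x₁ x₂ hx₂
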